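/- arXiv:2104.03552 — 3 statements merged into one kernel-verified Lean document; each statement's English description precedes it below -/
import Mathlib

section
/- Let T > τ > 0, x₀ ∈ ℝ, α > 0, and let S : ℝ × ℝ → ℝ be continuous with S(t, y) ≥ α for all (t, y). Let x : ℝ → ℝ be continuous with x(s) = x₀ for s ≤ 0 and x(t) = x₀ + ∫₀ᵗ S(s, x(s−τ)) ds on [0, T]. Set x̂ = x₀ + (T − τ) α. Then for every value v ∈ (x₀, x̂) there exists a unique t_v ∈ (τ, T) with x(t_v − τ) = v. -/
/-- Well-posedness of the hitting time `t_v` defined by `x(t_v - τ) = v`: under condition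
(C₁), for every level `v ∈ (x₀, x̂)` with `x̂ = x₀ + (T - τ) α`, there is a unique time
`t_v ∈ (τ, T)` at which the deterministic solution, delayed by `τ`, reaches `v`. -/
theorem delay_ode_hitting_time_exists_unique
    (T τ x₀ α : ℝ) (hτ : 0 < τ) (hT : τ < T) (hα : 0 < α)
    (S : ℝ → ℝ → ℝ)
    (hScont : Continuous fun p : ℝ × ℝ => S p.1 p.2)
    (hSα : ∀ t y : ℝ, α ≤ S t y)
    (x : ℝ → ℝ) (hxc : Continuous x) (hx0 : ∀ s ≤ (0:ℝ), x s = x₀)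
    (hxeq : ∀ t ∈ Set.Icc (0:ℝ) T, x t = x₀ + ∫ s in (0:ℝ)..t, S s (x (s - τ))) :
    ∀ v ∈ Set.Ioo x₀ (x₀ + (T - τ) * α),
      ∃! tv : ℝ, tv ∈ Set.Ioo τ T ∧ x (tv - τ) = v := by
  intro v hv
  set f : ℝ → ℝ := fun s => S s (x (s - τ)) with hf_def
  have hfc : Continuous f :=
    hScont.comp (continuous_id.prodMk (hxc.comp (continuous_id.sub continuous_const)))
  -- key growth estimate
  have key : ∀ a b : ℝ, a ∈ Set.Icc (0:ℝ) T → b ∈ Set.Icc (0:ℝ) T → a ≤ b →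
      α * (b - a) ≤ x b - x a := by
    intro a b ha hb hab
    have hInt : ∀ c d : ℝ, IntervalIntegrable f MeasureTheory.volume c d :=
      fun c d => hfc.intervalIntegrable c d
    have h1 : x b - x a = ∫ s in a..b, f s := by
      rw [hxeq a ha, hxeq b hb]
      have := intervalIntegral.integral_add_adjacent_intervals (hInt 0 a) (hInt a b)
      linarith [this]
    have h2 : (∫ s in a..b, (α:ℝ)) ≤ ∫ s in a..b, f s := by
      apply intervalIntegral.integral_mono_on hab (intervalIntegrable_const) (hInt a b)
      intro s _; exact hSα s _
    rw [h1]
    calc α * (b - a) = ∫ s in a..b, (α:ℝ) := by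
          rw [intervalIntegral.integral_const, smul_eq_mul, mul_comm]
      _ ≤ _ := h2
  have hx00 : x 0 = x₀ := hx0 0 le_rfl
  have hTτ : (0:ℝ) ≤ T - τ := by linarith
  have hTτmem : T - τ ∈ Set.Icc (0:ℝ) T := ⟨hTτ, by linarith⟩
  have h0mem : (0:ℝ) ∈ Set.Icc (0:ℝ) T := ⟨le_rfl, by linarith⟩
  have hxTτ : x₀ + (T - τ) * α ≤ x (T - τ) := by
    have := key 0 (T - τ) h0mem hTτmem hTτ
    rw [hx00] at this; nlinarith
  -- existence via IVT
  have hIvt : v ∈ Set.Ioo (x 0) (x (T - τ)) := by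
    constructor
    · rw [hx00]; exact hv.1
    · exact lt_of_lt_of_le hv.2 hxTτ
  obtain ⟨u, hu, hxu⟩ := intermediate_value_Ioo hTτ hxc.continuousOn hIvt
  refine ⟨u + τ, ⟨⟨by linarith [hu.1], by linarith [hu.2]⟩, by simpa using hxu⟩, ?_⟩
  -- uniqueness
  intro t' ⟨ht', hxt'⟩
  by_contra hne
  have hmem : ∀ s : ℝ, s ∈ Set.Ioo τ T → s - τ ∈ Set.Icc (0:ℝ) T := by
    intro s hs; exact ⟨by linarith [hs.1], by linarith [hs.2]⟩
  have h1 := hmem _ ht'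
  have h2 : u + τ - τ ∈ Set.Icc (0:ℝ) T := by
    simp only [add_sub_cancel_right]
    exact ⟨le_of_lt hu.1, by linarith [hu.2]⟩
  rcases lt_or_gt_of_ne hne with h | h
  · have := key (t' - τ) (u + τ - τ) h1 h2 (by linarith)
    rw [hxt'] at this
    simp only [add_sub_cancel_right] at this
    rw [hxu] at this
    nlinarith
  · have := key (u + τ - τ) (t' - τ) h2 h1 (by linarith)
    rw [hxt'] at this
    simp only [add_sub_cancel_right] at this
    rw [hxu] at this
    nlinarith
end

section
/- Let T > τ > 0, x₀ ∈ ℝ, ε > 0, α > 0, L > 0, let w : [0, T] → ℝ be continuous with w(0) = 0, and let S : ℝ × ℝ → ℝ be continuous with S(t, y) ≥ α for all (t, y) and Lipschitz in its second variable with constant L. Let x and X be continuous on ℝ, equal to x₀ on (−∞, 0], with x(t) = x₀ + ∫₀ᵗ S(s, x(s−τ)) ds and X(t) = x₀ + ∫₀ᵗ S(s, X(s−τ)) ds + ε w(t) on [0, T]. Suppose t₁, t₂ ∈ [τ, T] satisfy x(t₁ − τ) = X(t₂ − τ). Then |t₂ − t₁| ≤ α^{−1} ε ( L (T − τ) e^{L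 T} + 1 ) sup_{0 ≤ s ≤ T} |w(s)|. -/
/-- Pathwise content of inequality (3.13): if the deterministic solution `x` reaches a
level at time `t₁` (delayed by `τ`) and the perturbed solution `X` reaches the same level
at time `t₂`, then `|t₂ - t₁| ≤ α⁻¹ ε (L (T - τ) e^{LT} + 1) sup_{0≤s≤T} |w(s)|`. -/
theorem delay_hitting_time_displacement
    (T τ x₀ ε α L : ℝ) (hτ : 0 < τ) (hT : τ < T) (hε : 0 < ε) (hα : 0 < α) (hL : 0 < L)
    (w : ℝ → ℝ) (hw : ContinuousOn w (Set.Icc 0 T)) (hw0 : w 0 = 0)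
    (S : ℝ → ℝ → ℝ)
    (hScont : Continuous fun p : ℝ × ℝ => S p.1 p.2)
    (hSα : ∀ t y : ℝ, α ≤ S t y)
    (hSLip : ∀ t x y : ℝ, |S t x - S t y| ≤ L * |x - y|)
    (x X : ℝ → ℝ) (hxc : Continuous x) (hXc : Continuous X)
    (hx0 : ∀ s ≤ (0:ℝ), x s = x₀) (hX0 : ∀ s ≤ (0:ℝ), X s = x₀)
    (hxeq : ∀ t ∈ Set.Icc (0:ℝ) T, x t = x₀ + ∫ s in (0:ℝ)..t, S s (x (s - τ)))
    (hXeq : ∀ t ∈ Set.Icc (0:ℝ) T,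
      X t = x₀ + (∫ s in (0:ℝ)..t, S s (X (s - τ))) + ε * w t)
    (t₁ t₂ : ℝ) (ht₁ : t₁ ∈ Set.Icc τ T) (ht₂ : t₂ ∈ Set.Icc τ T)
    (hhit : x (t₁ - τ) = X (t₂ - τ)) :
    |t₂ - t₁| ≤
      α⁻¹ * ε * (L * (T - τ) * Real.exp (L * T) + 1) *
        ⨆ s : Set.Icc (0:ℝ) T, |w s.1| := by
  have hT0 : (0:ℝ) ≤ T := (hτ.trans hT).le
  -- the sup
  set M : ℝ := ⨆ s : Set.Icc (0:ℝ) T, |w s.1| with hMdef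
  have hbdd : BddAbove (Set.range fun s : Set.Icc (0:ℝ) T => |w s.1|) := by
    obtain ⟨C, hC⟩ := isCompact_Icc.exists_bound_of_continuousOn hw
    refine ⟨C, ?_⟩
    rintro _ ⟨s, rfl⟩
    simpa using hC s.1 s.2
  have hwM : ∀ s ∈ Set.Icc (0:ℝ) T, |w s| ≤ M := fun s hs =>
    le_ciSup hbdd (⟨s, hs⟩ : Set.Icc (0:ℝ) T)
  have hM0 : 0 ≤ M := (abs_nonneg _).trans (hwM 0 ⟨le_refl _, hT0⟩)
  -- the difference function
  set f : ℝ → ℝ := fun t => |X t - x t| with hfdef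
  have hfc : Continuous f := (hXc.sub hxc).abs
  have hfnn : ∀ s, 0 ≤ f s := fun s => abs_nonneg _
  have hf0 : ∀ s ≤ (0:ℝ), f s = 0 := by
    intro s hs; simp [hfdef, hX0 s hs, hx0 s hs]
  -- continuity / integrability of integrands
  have hpxc : Continuous fun s => S s (x (s - τ)) :=
    hScont.comp (continuous_id.prodMk (hxc.comp (continuous_sub_right τ)))
  have hpXc : Continuous fun s => S s (X (s - τ)) :=
    hScont.comp (continuous_id.prodMk (hXc.comp (continuous_sub_right τ)))
  have hdiffc : Continuous fun s => S s (X (s - τ)) - S s (x (s - τ)) := hpXc.sub hpxc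
  have hfτc : Continuous fun s => f (s - τ) := hfc.comp (continuous_sub_right τ)
  -- primitive of f
  set g : ℝ → ℝ := fun t => ∫ s in (0:ℝ)..t, f s with hgdef
  have hg' : ∀ t : ℝ, HasDerivAt g (f t) t := fun t =>
    (hfc.integral_hasStrictDerivAt 0 t).hasDerivAt
  have hgc : Continuous g := continuous_iff_continuousAt.2 fun t => (hg' t).continuousAt
  have hgnn : ∀ t, 0 ≤ t → 0 ≤ g t := fun t ht =>
    intervalIntegral.integral_nonneg ht (fun u _ => hfnn u)
  -- the delayed integral of f is bounded by g
  have hdelay : ∀ t : ℝ, 0 ≤ t → (∫ s in (0:ℝ)..t, f (s - τ)) ≤ g t := by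
    intro t ht
    rw [intervalIntegral.integral_comp_sub_right f τ]
    have h1 : (∫ s in (0-τ)..(t-τ), f s) + ∫ s in (t-τ)..t, f s = ∫ s in (0-τ)..t, f s :=
      intervalIntegral.integral_add_adjacent_intervals
        (hfc.intervalIntegrable _ _) (hfc.intervalIntegrable _ _)
    have h2 : (∫ s in (0-τ)..(0:ℝ), f s) + ∫ s in (0:ℝ)..t, f s = ∫ s in (0-τ)..t, f s :=
      intervalIntegral.integral_add_adjacent_intervals
        (hfc.intervalIntegrable _ _) (hfc.intervalIntegrable _ _)
    have h3 : (∫ s in (0-τ)..(0:ℝ), f s) = 0 := by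
      have : Set.EqOn f (fun _ => (0:ℝ)) (Set.uIcc (0-τ) 0) := by
        intro s hs
        rw [Set.uIcc_of_le (by linarith)] at hs
        exact hf0 s hs.2
      rw [intervalIntegral.integral_congr this, intervalIntegral.integral_zero]
    have h4 : 0 ≤ ∫ s in (t-τ)..t, f s :=
      intervalIntegral.integral_nonneg (by linarith) (fun u _ => hfnn u)
    have hgt : g t = ∫ s in (0:ℝ)..t, f s := rfl
    linarith
  -- key integral inequality
  have key : ∀ t ∈ Set.Icc (0:ℝ) T, f t ≤ L * g t + ε * M := by
    intro t ht
    have hXx : X t - x t =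
        (∫ s in (0:ℝ)..t, (S s (X (s - τ)) - S s (x (s - τ)))) + ε * w t := by
      rw [intervalIntegral.integral_sub (hpXc.intervalIntegrable _ _)
        (hpxc.intervalIntegrable _ _), hxeq t ht, hXeq t ht]
      ring
    have h1 : f t ≤ |∫ s in (0:ℝ)..t, (S s (X (s - τ)) - S s (x (s - τ)))| + |ε * w t| := by
      have hft : f t = |X t - x t| := rfl
      rw [hft, hXx]; exact abs_add_le _ _
    have h2 : |∫ s in (0:ℝ)..t, (S s (X (s - τ)) - S s (x (s - τ)))| ≤
        ∫ s in (0:ℝ)..t, |S s (X (s - τ)) - S s (x (s - τ))| :=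
      intervalIntegral.abs_integral_le_integral_abs ht.1
    have h3 : (∫ s in (0:ℝ)..t, |S s (X (s - τ)) - S s (x (s - τ))|) ≤
        ∫ s in (0:ℝ)..t, L * f (s - τ) := by
      refine intervalIntegral.integral_mono_on ht.1 (hdiffc.abs.intervalIntegrable _ _)
        ((continuous_const.mul hfτc).intervalIntegrable _ _) (fun s _ => ?_)
      exact hSLip s _ _
    have h4 : (∫ s in (0:ℝ)..t, L * f (s - τ)) = L * ∫ s in (0:ℝ)..t, f (s - τ) :=
      intervalIntegral.integral_const_mul _ _
    have h5 : L * (∫ s in (0:ℝ)..t, f (s - τ)) ≤ L * g t :=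
      mul_le_mul_of_nonneg_left (hdelay t ht.1) hL.le
    have h6 : |ε * w t| ≤ ε * M := by
      rw [abs_mul, abs_of_pos hε]
      exact mul_le_mul_of_nonneg_left (hwM t ht) hε.le
    linarith
  -- Gronwall
  have hgron : ∀ t ∈ Set.Icc (0:ℝ) T, ‖g t‖ ≤ gronwallBound 0 L (ε * M) (t - 0) := by
    refine norm_le_gronwallBound_of_norm_deriv_right_le hgc.continuousOn
      (fun t _ => (hg' t).hasDerivWithinAt) (by simp [hgdef]) (fun t ht => ?_)
    have htT : t ∈ Set.Icc (0:ℝ) T := ⟨ht.1, ht.2.le⟩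
    have h1 := key t htT
    rw [Real.norm_eq_abs, Real.norm_eq_abs, abs_of_nonneg (hfnn t),
      abs_of_nonneg (hgnn t ht.1)]
    exact h1
  -- bound on f
  have hfb : ∀ t ∈ Set.Icc (0:ℝ) T, f t ≤ ε * M * Real.exp (L * T) := by
    intro t ht
    have h1 := hgron t ht
    rw [gronwallBound_of_K_ne_0 hL.ne'] at h1
    simp only [sub_zero, zero_mul, zero_add, Real.norm_eq_abs] at h1
    rw [abs_of_nonneg (hgnn t ht.1)] at h1
    have h2 := key t ht
    have h3 : L * g t ≤ L * (ε * M / L * (Real.exp (L * t) - 1)) :=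
      mul_le_mul_of_nonneg_left h1 hL.le
    have h4 : L * (ε * M / L * (Real.exp (L * t) - 1)) = ε * M * (Real.exp (L * t) - 1) := by
      field_simp
    have h5 : Real.exp (L * t) ≤ Real.exp (L * T) :=
      Real.exp_le_exp.2 (mul_le_mul_of_nonneg_left ht.2 hL.le)
    have hεM : 0 ≤ ε * M := mul_nonneg hε.le hM0
    nlinarith
  -- hitting-time comparison
  set a : ℝ := t₁ - τ with hadef
  set b : ℝ := t₂ - τ with hbdef
  have ha : a ∈ Set.Icc (0:ℝ) T := ⟨by simp [hadef]; linarith [ht₁.1], by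
    simp [hadef]; linarith [ht₁.2]⟩
  have hb : b ∈ Set.Icc (0:ℝ) T := ⟨by simp [hbdef]; linarith [ht₂.1], by
    simp [hbdef]; linarith [ht₂.2]⟩
  have hbTτ : b ≤ T - τ := by simp [hbdef]; linarith [ht₂.2]
  have heq : (∫ s in b..a, S s (x (s - τ))) =
      (∫ s in (0:ℝ)..b, (S s (X (s - τ)) - S s (x (s - τ)))) + ε * w b := by
    have h1 := hxeq a ha
    have h2 := hXeq b hb
    have h3 : (∫ s in (0:ℝ)..b, S s (x (s - τ))) + (∫ s in b..a, S s (x (s - τ))) =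
        ∫ s in (0:ℝ)..a, S s (x (s - τ)) :=
      intervalIntegral.integral_add_adjacent_intervals
        (hpxc.intervalIntegrable _ _) (hpxc.intervalIntegrable _ _)
    have hsub : (∫ s in (0:ℝ)..b, (S s (X (s - τ)) - S s (x (s - τ)))) =
        (∫ s in (0:ℝ)..b, S s (X (s - τ))) - ∫ s in (0:ℝ)..b, S s (x (s - τ)) :=
      intervalIntegral.integral_sub (hpXc.intervalIntegrable _ _)
        (hpxc.intervalIntegrable _ _)
    rw [hsub]
    rw [hhit] at h1
    linarith
  -- lower bound
  have hlow : α * |t₂ - t₁| ≤ |∫ s in b..a, S s (x (s - τ))| := by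
    have habs : |t₂ - t₁| = |b - a| := by rw [hadef, hbdef]; congr 1; ring
    rw [habs]
    rcases le_total b a with hba | hab
    · have hint : α * (a - b) ≤ ∫ s in b..a, S s (x (s - τ)) := by
        have h := intervalIntegral.integral_mono_on hba (intervalIntegrable_const (μ := MeasureTheory.volume))
          (hpxc.intervalIntegrable b a) (fun s _ => hSα s (x (s - τ)))
        rw [intervalIntegral.integral_const, smul_eq_mul] at h
        linarith
      rw [abs_sub_comm, abs_of_nonneg (by linarith : (0:ℝ) ≤ a - b)]
      calc α * (a - b) ≤ ∫ s in b..a, S s (x (s - τ)) := hint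
        _ ≤ |∫ s in b..a, S s (x (s - τ))| := le_abs_self _
    · have hint : α * (b - a) ≤ ∫ s in a..b, S s (x (s - τ)) := by
        have h := intervalIntegral.integral_mono_on hab (intervalIntegrable_const (μ := MeasureTheory.volume))
          (hpxc.intervalIntegrable a b) (fun s _ => hSα s (x (s - τ)))
        rw [intervalIntegral.integral_const, smul_eq_mul] at h
        linarith
      rw [abs_of_nonneg (by linarith : (0:ℝ) ≤ b - a), intervalIntegral.integral_symm, abs_neg]
      calc α * (b - a) ≤ ∫ s in a..b, S s (x (s - τ)) := hint
        _ ≤ |∫ s in a..b, S s (x (s - τ))| := le_abs_self _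
  -- upper bound
  have hup : |(∫ s in (0:ℝ)..b, (S s (X (s - τ)) - S s (x (s - τ)))) + ε * w b| ≤
      ε * M * (L * (T - τ) * Real.exp (L * T)) + ε * M := by
    have h1 : |(∫ s in (0:ℝ)..b, (S s (X (s - τ)) - S s (x (s - τ)))) + ε * w b| ≤
        |∫ s in (0:ℝ)..b, (S s (X (s - τ)) - S s (x (s - τ)))| + |ε * w b| := abs_add_le _ _
    have h2 : |∫ s in (0:ℝ)..b, (S s (X (s - τ)) - S s (x (s - τ)))| ≤
        ∫ s in (0:ℝ)..b, |S s (X (s - τ)) - S s (x (s - τ))| :=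
      intervalIntegral.abs_integral_le_integral_abs hb.1
    have hptw : ∀ s ∈ Set.Icc (0:ℝ) b,
        |S s (X (s - τ)) - S s (x (s - τ))| ≤ L * (ε * M * Real.exp (L * T)) := by
      intro s hs
      have hLip := hSLip s (X (s - τ)) (x (s - τ))
      have hfsτ : f (s - τ) ≤ ε * M * Real.exp (L * T) := by
        rcases le_or_gt (s - τ) 0 with hsτ | hsτ
        · rw [hf0 _ hsτ]
          positivity
        · exact hfb (s - τ) ⟨hsτ.le, by
            have := hs.2; have := hbTτ; linarith⟩
      calc |S s (X (s - τ)) - S s (x (s - τ))| ≤ L * f (s - τ) := hLip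
        _ ≤ L * (ε * M * Real.exp (L * T)) := mul_le_mul_of_nonneg_left hfsτ hL.le
    have h3 : (∫ s in (0:ℝ)..b, |S s (X (s - τ)) - S s (x (s - τ))|) ≤
        ∫ s in (0:ℝ)..b, L * (ε * M * Real.exp (L * T)) :=
      intervalIntegral.integral_mono_on hb.1 (hdiffc.abs.intervalIntegrable _ _)
        (intervalIntegrable_const (μ := MeasureTheory.volume)) hptw
    have h4 : (∫ s in (0:ℝ)..b, L * (ε * M * Real.exp (L * T))) =
        b * (L * (ε * M * Real.exp (L * T))) := by
      rw [intervalIntegral.integral_const, smul_eq_mul, sub_zero]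
    have h5 : b * (L * (ε * M * Real.exp (L * T))) ≤
        (T - τ) * (L * (ε * M * Real.exp (L * T))) := by
      have hpos : 0 ≤ L * (ε * M * Real.exp (L * T)) := by positivity
      exact mul_le_mul_of_nonneg_right hbTτ hpos
    have h6 : |ε * w b| ≤ ε * M := by
      rw [abs_mul, abs_of_pos hε]
      exact mul_le_mul_of_nonneg_left (hwM b hb) hε.le
    nlinarith
  -- conclude
  have hmain : α * |t₂ - t₁| ≤ ε * M * (L * (T - τ) * Real.exp (L * T)) + ε * M := by
    calc α * |t₂ - t₁| ≤ |∫ s in b..a, S s (x (s - τ))| := hlow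
      _ = |(∫ s in (0:ℝ)..b, (S s (X (s - τ)) - S s (x (s - τ)))) + ε * w b| := by rw [heq]
      _ ≤ _ := hup
  calc |t₂ - t₁| = α⁻¹ * (α * |t₂ - t₁|) := by field_simp
    _ ≤ α⁻¹ * (ε * M * (L * (T - τ) * Real.exp (L * T)) + ε * M) :=
        mul_le_mul_of_nonneg_left hmain (inv_nonneg.2 hα.le)
    _ = α⁻¹ * ε * (L * (T - τ) * Real.exp (L * T) + 1) * M := by ring
end

section
/- Let T > τ > 0, x₀ ∈ ℝ, ε > 0, α > 0, L > 0, M > 0, B > 0, let w : [0, T] → ℝ be continuous with w(0) = 0, and let S : ℝ × ℝ → ℝ be continuously differentiable with α ≤ S(t, y) ≤ B, |∂S/∂t(t, y)| ≤ M, |∂S/∂x(t, y)| ≤ L, and with |∂²S/∂t²|, |∂²S/∂t∂x|, |∂²S/∂x²| all bounded by M₂ on ℝ². Let x and X be continuous on ℝ, equal to x₀ on (−∞, 0], with x(t) = x₀ + ∫₀ᵗ S(s, x(s−τ)) ds and X(t) = x₀ + ∫₀ᵗ S(s, X(s−τ)) ds + ε w(t) on [0, T]. Let G : ℝ → ℝ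 be bounded, integrable, with G(u) = 0 for |u| ≥ 1, ∫_{−1}^{1} G(u) du = 1 and ∫_{−1}^{1} u G(u) du = 0. Suppose t₁, t₂ ∈ (τ, T) satisfy x(t₁ − τ) = X(t₂ − τ), t₁ − τ ≠ τ and t₂ − τ ≠ τ, and φ > 0 satisfies t₂ − φ ≥ 2τ and t₂ + φ ≤ T. Then there exists a constant C > 0 depending only on T, τ, α, L, M, B, M₂ and G such that | (1/φ) ∫₀ᵀ G((s − t₂)/φ) S(s, X(s−τ)) ds − S(t₁, x(t₁ − τ)) | ≤ C ( φ² + ε sup_{0 ≤ s ≤ T} |w(s)| ). -/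
/-!
After the substitution `s = t₂ + φ u` the kernel average becomes
`∫_{-1}^{1} G(u) S(t₂ + φ u, X(t₂ + φ u - τ)) du`. Since `G` has mass one and vanishing first
moment it reproduces affine functions exactly, so the error is at most `∫|G|` times the largest
deviation, over the window `|s - t₂| ≤ φ`, of `S(s, X(s - τ))` from an affine function with value
`g(t₁)` at `t₂`, where `g(s) = S(s, x(s - τ))` is the unperturbed drift. This deviation has three
parts:
* `|X - x| ≤ ε sup|w| e^{LT}` by Grönwall; the delay only looks back, and before time `0` both
  solutions agree;
* the Taylor remainder of `g` at `t₂`, which is `O(φ²)` because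
  `g'(s) = DS(s, x(s - τ)) (1, g(s - τ))` is Lipschitz: `DS` is Lipschitz by the bounds on the
  second partials and the symmetry of the Hessian;
* `|g(t₂) - g(t₁)| = O(|t₂ - t₁|)`, and `x` grows at rate at least `α`, so it reaches the level
  `X(t₂ - τ)` within `ε sup|w| e^{LT} / α` of `t₂`.
-/

open MeasureTheory Set Real

section PartialDerivatives

variable {E : Type*} [NormedAddCommGroup E] [NormedSpace ℝ E] {F : ℝ × ℝ → E}
  {F' : ℝ × ℝ →L[ℝ] E} {t y : ℝ}

theorem HasFDerivAt.hasDerivAt_slice_fst (h : HasFDerivAt F F' (t, y)) :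
    HasDerivAt (fun a => F (a, y)) (F' (1, 0)) t :=
  h.comp_hasDerivAt t ((hasDerivAt_id t).prodMk (hasDerivAt_const t y))

theorem HasFDerivAt.hasDerivAt_slice_snd (h : HasFDerivAt F F' (t, y)) :
    HasDerivAt (fun b => F (t, b)) (F' (0, 1)) y :=
  h.comp_hasDerivAt y ((hasDerivAt_const y t).prodMk (hasDerivAt_id y))

theorem ContinuousLinearMap.norm_le_norm_apply_add_norm_apply (ℓ : ℝ × ℝ →L[ℝ] E) :
    ‖ℓ‖ ≤ ‖ℓ (1, 0)‖ + ‖ℓ (0, 1)‖ := by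
  refine ℓ.opNorm_le_bound (by positivity) fun v => ?_
  have hv : v = v.1 • ((1 : ℝ), (0 : ℝ)) + v.2 • ((0 : ℝ), (1 : ℝ)) := by ext <;> simp
  calc ‖ℓ v‖ = ‖v.1 • ℓ (1, 0) + v.2 • ℓ (0, 1)‖ := by
        rw [← map_smul, ← map_smul, ← map_add, ← hv]
    _ ≤ ‖v.1‖ * ‖ℓ (1, 0)‖ + ‖v.2‖ * ‖ℓ (0, 1)‖ := by
        refine (norm_add_le _ _).trans ?_; rw [norm_smul, norm_smul]
    _ ≤ ‖v‖ * ‖ℓ (1, 0)‖ + ‖v‖ * ‖ℓ (0, 1)‖ := by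
        gcongr
        · exact _root_.norm_fst_le v
        · exact _root_.norm_snd_le v
    _ = (‖ℓ (1, 0)‖ + ‖ℓ (0, 1)‖) * ‖v‖ := by ring

end PartialDerivatives

section BoundedPartials

variable {f : ℝ × ℝ → ℝ} {M L M₂ : ℝ}

theorem abs_sub_le_of_abs_deriv_slice_le (hf : Differentiable ℝ f)
    (hM : ∀ t y, |deriv (fun a => f (a, y)) t| ≤ M)
    (hL : ∀ t y, |deriv (fun b => f (t, b)) y| ≤ L) (t y t' y' : ℝ) :
    |f (t, y) - f (t', y')| ≤ M * |t - t'| + L * |y - y'| := by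
  have hfst : |f (t, y) - f (t', y)| ≤ M * |t - t'| :=
    convex_univ.norm_image_sub_le_of_norm_deriv_le (f := fun a => f (a, y))
      (fun a _ => (hf (a, y)).hasFDerivAt.hasDerivAt_slice_fst.differentiableAt)
      (fun a _ => hM a y) trivial trivial
  have hsnd : |f (t', y) - f (t', y')| ≤ L * |y - y'| :=
    convex_univ.norm_image_sub_le_of_norm_deriv_le (f := fun b => f (t', b))
      (fun b _ => (hf (t', b)).hasFDerivAt.hasDerivAt_slice_snd.differentiableAt)
      (fun b _ => hL t' b) trivial trivial
  linarith [abs_sub_le (f (t, y)) (f (t', y)) (f (t', y'))]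

theorem norm_fderiv_le_of_abs_deriv_slice_le (hf : Differentiable ℝ f)
    (hM : ∀ t y, |deriv (fun a => f (a, y)) t| ≤ M)
    (hL : ∀ t y, |deriv (fun b => f (t, b)) y| ≤ L) (p : ℝ × ℝ) :
    ‖fderiv ℝ f p‖ ≤ M + L := by
  have h₁ := (hf p).hasFDerivAt.hasDerivAt_slice_fst.deriv
  have h₂ := (hf p).hasFDerivAt.hasDerivAt_slice_snd.deriv
  refine (fderiv ℝ f p).norm_le_norm_apply_add_norm_apply.trans (add_le_add ?_ ?_)
  · simpa [← h₁] using hM p.1 p.2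
  · simpa [← h₂] using hL p.1 p.2

theorem norm_fderiv_fderiv_le (hf : ContDiff ℝ 2 f)
    (h₁₁ : ∀ t y, |deriv (deriv (fun a => f (a, y))) t| ≤ M₂)
    (h₁₂ : ∀ t y, |deriv (fun a => deriv (fun b => f (a, b)) y) t| ≤ M₂)
    (h₂₂ : ∀ t y, |deriv (deriv (fun b => f (t, b))) y| ≤ M₂) (p : ℝ × ℝ) :
    ‖fderiv ℝ (fderiv ℝ f) p‖ ≤ 4 * M₂ := by
  obtain ⟨t, y⟩ := p
  have hf₁ : Differentiable ℝ f := hf.differentiable two_ne_zero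
  have hf₂ : Differentiable ℝ (fderiv ℝ f) :=
    (hf.fderiv_right (m := 1) le_rfl).differentiable one_ne_zero
  set H := fderiv ℝ (fderiv ℝ f) (t, y)
  have hd₁ : ∀ y, deriv (fun a => f (a, y)) = fun a => fderiv ℝ f (a, y) (1, 0) :=
    fun y => funext fun a => (hf₁ (a, y)).hasFDerivAt.hasDerivAt_slice_fst.deriv
  have hd₂ : ∀ t, deriv (fun b => f (t, b)) = fun b => fderiv ℝ f (t, b) (0, 1) :=
    fun t => funext fun b => (hf₁ (t, b)).hasFDerivAt.hasDerivAt_slice_snd.deriv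
  have hH₁ (v : ℝ × ℝ) : deriv (fun a => fderiv ℝ f (a, y) v) t = H (1, 0) v := by
    simpa using ((hf₂ (t, y)).hasFDerivAt.hasDerivAt_slice_fst.clm_apply
      (hasDerivAt_const t v)).deriv
  have hH₂ (v : ℝ × ℝ) : deriv (fun b => fderiv ℝ f (t, b) v) y = H (0, 1) v := by
    simpa using ((hf₂ (t, y)).hasFDerivAt.hasDerivAt_slice_snd.clm_apply
      (hasDerivAt_const y v)).deriv
  have e₁₁ : |H (1, 0) (1, 0)| ≤ M₂ := by simpa [hd₁, hH₁] using h₁₁ t y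
  have e₁₂ : |H (1, 0) (0, 1)| ≤ M₂ := by simpa [hd₂, hH₁] using h₁₂ t y
  have e₂₁ : |H (0, 1) (1, 0)| ≤ M₂ := by
    rwa [(hf.contDiffAt.isSymmSndFDerivAt (by simp)) (0, 1) (1, 0)]
  have e₂₂ : |H (0, 1) (0, 1)| ≤ M₂ := by simpa [hd₂, hH₂] using h₂₂ t y
  calc ‖H‖ ≤ ‖H (1, 0)‖ + ‖H (0, 1)‖ := H.norm_le_norm_apply_add_norm_apply
    _ ≤ (‖H (1, 0) (1, 0)‖ + ‖H (1, 0) (0, 1)‖) + (‖H (0, 1) (1, 0)‖ + ‖H (0, 1) (0, 1)‖) :=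
        add_le_add (H (1, 0)).norm_le_norm_apply_add_norm_apply
          (H (0, 1)).norm_le_norm_apply_add_norm_apply
    _ ≤ 4 * M₂ := by simp only [Real.norm_eq_abs]; linarith

theorem norm_fderiv_sub_fderiv_le (hf : ContDiff ℝ 2 f)
    (h₁₁ : ∀ t y, |deriv (deriv (fun a => f (a, y))) t| ≤ M₂)
    (h₁₂ : ∀ t y, |deriv (fun a => deriv (fun b => f (a, b)) y) t| ≤ M₂)
    (h₂₂ : ∀ t y, |deriv (deriv (fun b => f (t, b))) y| ≤ M₂) (p q : ℝ × ℝ) :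
    ‖fderiv ℝ f p - fderiv ℝ f q‖ ≤ 4 * M₂ * ‖p - q‖ :=
  convex_univ.norm_image_sub_le_of_norm_fderiv_le
    (fun z _ => (hf.fderiv_right (m := 1) le_rfl).differentiable one_ne_zero z)
    (fun z _ => norm_fderiv_fderiv_le hf h₁₁ h₁₂ h₂₂ z) trivial trivial

end BoundedPartials

theorem ContinuousLinearMap.norm_apply_sub_apply_le {E F : Type*} [NormedAddCommGroup E]
    [NormedSpace ℝ E] [NormedAddCommGroup F] [NormedSpace ℝ F] (A A' : E →L[ℝ] F) (v v' : E) :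
    ‖A v - A' v'‖ ≤ ‖A - A'‖ * ‖v‖ + ‖A'‖ * ‖v - v'‖ := by
  have : A v - A' v' = (A - A') v + A' (v - v') := by simp
  rw [this]
  exact (norm_add_le _ _).trans (add_le_add ((A - A').le_opNorm v) (A'.le_opNorm _))

theorem abs_sub_sub_mul_le_of_abs_deriv_sub_le {g g' : ℝ → ℝ} {s : Set ℝ} {K r₀ r : ℝ}
    (hs : Convex ℝ s) (hK : 0 ≤ K) (hg : ∀ q ∈ s, HasDerivAt g (g' q) q)
    (hg' : ∀ q ∈ s, |g' q - g' r₀| ≤ K * |q - r₀|) (hr₀ : r₀ ∈ s) (hr : r ∈ s) :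
    |g r - g r₀ - (r - r₀) * g' r₀| ≤ K * (r - r₀) ^ 2 := by
  have hseg : uIcc r₀ r ⊆ s := hs.ordConnected.uIcc_subset hr₀ hr
  have hmvt := (convex_uIcc r₀ r).norm_image_sub_le_of_norm_hasDerivWithin_le
    (f := fun q => g q - (q - r₀) * g' r₀) (f' := fun q => g' q - g' r₀)
    (fun q hq => by
      simpa using ((hg q (hseg hq)).fun_sub (((hasDerivAt_id q).sub_const r₀).mul_const
        (g' r₀))).hasDerivWithinAt)
    (fun q hq => (hg' q (hseg hq)).trans
      (mul_le_mul_of_nonneg_left (abs_sub_left_of_mem_uIcc hq) hK))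
    left_mem_uIcc right_mem_uIcc
  simp only [sub_self, zero_mul, sub_zero, Real.norm_eq_abs] at hmvt
  rw [mul_assoc, ← pow_two, sq_abs] at hmvt
  rwa [sub_right_comm] at hmvt

section IntegralEquation

variable {u v : ℝ → ℝ} {u₀ T c d : ℝ}

theorem sub_eq_integral_of_eq_integral (hv : Continuous v)
    (hu : ∀ t ∈ Icc 0 T, u t = u₀ + ∫ s in (0 : ℝ)..t, v s) (hc : c ∈ Icc 0 T)
    (hd : d ∈ Icc 0 T) : u d - u c = ∫ s in c..d, v s := by
  rw [hu d hd, hu c hc, add_sub_add_left_eq_sub,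
    intervalIntegral.integral_interval_sub_left (hv.intervalIntegrable _ _)
      (hv.intervalIntegrable _ _)]

theorem abs_sub_le_of_eq_integral {B : ℝ} (hv : Continuous v) (hvB : ∀ s, |v s| ≤ B)
    (hu : ∀ t ∈ Icc 0 T, u t = u₀ + ∫ s in (0 : ℝ)..t, v s) (hc : c ∈ Icc 0 T)
    (hd : d ∈ Icc 0 T) : |u d - u c| ≤ B * |d - c| := by
  rw [sub_eq_integral_of_eq_integral hv hu hc hd]
  exact intervalIntegral.norm_integral_le_of_norm_le_const (f := v) fun s _ => hvB s

theorem abs_sub_le_abs_sub_div_of_eq_integral {α : ℝ} (hα : 0 < α) (hv : Continuous v)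
    (hvα : ∀ s, α ≤ v s) (hu : ∀ t ∈ Icc 0 T, u t = u₀ + ∫ s in (0 : ℝ)..t, v s)
    (hc : c ∈ Icc 0 T) (hd : d ∈ Icc 0 T) : |d - c| ≤ |u d - u c| / α := by
  have hgrowth : ∀ c ∈ Icc 0 T, ∀ d ∈ Icc 0 T, c ≤ d → α * (d - c) ≤ u d - u c := by
    intro c hc d hd hcd
    rw [sub_eq_integral_of_eq_integral hv hu hc hd]
    simpa [mul_comm] using intervalIntegral.integral_mono_on hcd
      (intervalIntegrable_const (μ := volume)) (hv.intervalIntegrable c d) fun s _ => hvα s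
  rw [le_div_iff₀ hα]
  rcases le_total c d with hcd | hdc
  · rw [abs_of_nonneg (sub_nonneg.2 hcd)]
    linarith [hgrowth c hc d hd hcd, le_abs_self (u d - u c)]
  · rw [abs_sub_comm, abs_of_nonneg (sub_nonneg.2 hdc), abs_sub_comm]
    linarith [hgrowth d hd c hc hdc, le_abs_self (u c - u d)]

theorem hasDerivAt_of_eq_integral (hv : Continuous v)
    (hu : ∀ t ∈ Icc 0 T, u t = u₀ + ∫ s in (0 : ℝ)..t, v s) {t : ℝ} (ht : t ∈ Ioo 0 T) :
    HasDerivAt u (v t) t := by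
  refine ((hv.integral_hasStrictDerivAt 0 t).hasDerivAt.const_add u₀).congr_of_eventuallyEq ?_
  filter_upwards [Ioo_mem_nhds ht.1 ht.2] with s hs using hu s (Ioo_subset_Icc_self hs)

end IntegralEquation

theorem le_mul_exp_of_le_mul_integral_add {D : ℝ → ℝ} {K c T : ℝ} (hK : 0 ≤ K)
    (hD : Continuous D) (hD₀ : ∀ t, 0 ≤ D t)
    (hbound : ∀ t ∈ Icc 0 T, D t ≤ K * (∫ s in (0 : ℝ)..t, D s) + c) :
    ∀ t ∈ Icc 0 T, D t ≤ c * exp (K * t) := by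
  set u : ℝ → ℝ := fun t => ∫ s in (0 : ℝ)..t, D s
  have hu : ∀ t, HasDerivAt u (D t) t := fun t =>
    (hD.integral_hasStrictDerivAt 0 t).hasDerivAt
  have hu₀ : ∀ t, 0 ≤ t → 0 ≤ u t := fun t ht =>
    intervalIntegral.integral_nonneg ht fun s _ => hD₀ s
  have hgronwall := norm_le_gronwallBound_of_norm_deriv_right_le
    (f := u) (δ := 0) (ε := c) (a := 0) (b := T)
    (fun t _ => (hu t).continuousAt.continuousWithinAt) (fun t _ => (hu t).hasDerivWithinAt)
    (by simp [u]) fun t ht => by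
      rw [norm_of_nonneg (hD₀ t), norm_of_nonneg (hu₀ t ht.1)]
      exact hbound t (Ico_subset_Icc_self ht)
  intro t ht
  have hut := hgronwall t ht
  rw [norm_of_nonneg (hu₀ t ht.1), sub_zero] at hut
  calc D t ≤ K * u t + c := hbound t ht
    _ ≤ K * gronwallBound 0 K c t + c := by gcongr
    _ = c * exp (K * t) := by
      rcases eq_or_ne K 0 with rfl | hK₀
      · simp
      · rw [gronwallBound_of_K_ne_0 hK₀]
        field_simp
        ring

theorem integral_comp_sub_le_integral {D : ℝ → ℝ} {τ t : ℝ} (hD : Continuous D)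
    (hD₀ : ∀ s, 0 ≤ D s) (hDneg : ∀ s ≤ 0, D s = 0) (hτ : 0 ≤ τ) (ht : 0 ≤ t) :
    ∫ s in (0 : ℝ)..t, D (s - τ) ≤ ∫ s in (0 : ℝ)..t, D s := by
  have hpast : ∫ s in (-τ)..0, D s = 0 := by
    rw [intervalIntegral.integral_congr (g := 0) fun s hs => hDneg s ?_]
    · simp
    · exact hs.2.trans (max_le (neg_nonpos.2 hτ) le_rfl)
  rw [intervalIntegral.integral_comp_sub_right D τ, zero_sub]
  calc ∫ s in (-τ)..(t - τ), D s ≤ ∫ s in (-τ)..t, D s :=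
        intervalIntegral.integral_mono_interval le_rfl (by linarith) (by linarith)
          (ae_of_all _ hD₀) (hD.intervalIntegrable _ _)
    _ = ∫ s in (0 : ℝ)..t, D s := by
      rw [← intervalIntegral.integral_add_adjacent_intervals (hD.intervalIntegrable (-τ) 0)
        (hD.intervalIntegrable 0 t), hpast, zero_add]

theorem abs_sub_le_of_delay_integral_eq {f : ℝ × ℝ → ℝ} {x X e : ℝ → ℝ} {x₀ τ T L δ : ℝ}
    (hτ : 0 ≤ τ) (hL : 0 ≤ L) (hf : Continuous f)
    (hfL : ∀ t y y', |f (t, y) - f (t, y')| ≤ L * |y - y'|) (hx : Continuous x)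
    (hX : Continuous X) (hx₀ : ∀ s ≤ 0, x s = x₀) (hX₀ : ∀ s ≤ 0, X s = x₀)
    (hxeq : ∀ t ∈ Icc 0 T, x t = x₀ + ∫ s in (0 : ℝ)..t, f (s, x (s - τ)))
    (hXeq : ∀ t ∈ Icc 0 T, X t = x₀ + (∫ s in (0 : ℝ)..t, f (s, X (s - τ))) + e t)
    (he : ∀ t ∈ Icc 0 T, |e t| ≤ δ) :
    ∀ t ∈ Icc 0 T, |X t - x t| ≤ δ * exp (L * t) := by
  have hdrift : ∀ z : ℝ → ℝ, Continuous z → Continuous fun s => f (s, z (s - τ)) :=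
    fun z hz => hf.comp (continuous_id.prodMk (hz.comp (continuous_sub_right τ)))
  have hD : Continuous fun s => |X s - x s| := (hX.sub hx).abs
  refine le_mul_exp_of_le_mul_integral_add hL hD (fun t => abs_nonneg _) fun t ht => ?_
  have hdiff : X t - x t = (∫ s in (0 : ℝ)..t, (f (s, X (s - τ)) - f (s, x (s - τ)))) + e t := by
    rw [hXeq t ht, hxeq t ht, intervalIntegral.integral_sub
      ((hdrift X hX).intervalIntegrable _ _) ((hdrift x hx).intervalIntegrable _ _)]
    ring
  have hintegral : |∫ s in (0 : ℝ)..t, (f (s, X (s - τ)) - f (s, x (s - τ)))|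
      ≤ L * ∫ s in (0 : ℝ)..t, |X s - x s| :=
    calc _ ≤ ∫ s in (0 : ℝ)..t, L * |X (s - τ) - x (s - τ)| :=
          intervalIntegral.norm_integral_le_of_norm_le ht.1
            (f := fun s => f (s, X (s - τ)) - f (s, x (s - τ)))
            (ae_of_all _ fun s _ => hfL _ _ _) ((by fun_prop : Continuous fun s =>
              L * |X (s - τ) - x (s - τ)|).intervalIntegrable _ _)
      _ = L * ∫ s in (0 : ℝ)..t, |X (s - τ) - x (s - τ)| :=
          intervalIntegral.integral_const_mul _ _
      _ ≤ L * ∫ s in (0 : ℝ)..t, |X s - x s| := by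
          gcongr
          exact integral_comp_sub_le_integral hD (fun s => abs_nonneg _)
            (fun s hs => by simp [hx₀ s hs, hX₀ s hs]) hτ ht.1
  calc |X t - x t| ≤ _ := hdiff ▸ abs_add_le _ _
    _ ≤ _ := add_le_add hintegral (he t ht)

section Kernel

variable {G h : ℝ → ℝ} {a b t φ : ℝ}

theorem kernel_average_eq (hGsupp : ∀ u, 1 ≤ |u| → G u = 0) (hφ : 0 < φ) (ha : a ≤ t - φ)
    (hb : t + φ ≤ b) :
    (1 / φ) * ∫ s in a..b, G ((s - t) / φ) * h s = ∫ u in (-1 : ℝ)..1, G u * h (t + φ * u) := by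
  have hwindow : ∫ s in a..b, G ((s - t) / φ) * h s
      = ∫ s in (t - φ)..(t + φ), G ((s - t) / φ) * h s := by
    rw [intervalIntegral.integral_of_le (by linarith),
      intervalIntegral.integral_of_le (by linarith)]
    refine setIntegral_eq_of_subset_of_forall_sdiff_eq_zero measurableSet_Ioc
      (Ioc_subset_Ioc ha hb) fun s hs => ?_
    have hout : φ ≤ |s - t| := by
      simp only [mem_sdiff, mem_Ioc, not_and_or, not_lt, not_le] at hs
      rcases hs.2 with hs | hs
      · exact le_abs.2 (Or.inr (by linarith))
      · exact le_abs.2 (Or.inl (by linarith))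
    rw [hGsupp _ (by rwa [abs_div, abs_of_pos hφ, le_div_iff₀ hφ, one_mul]), zero_mul]
  have hsubst : ∫ u in (-1 : ℝ)..1, G u * h (t + φ * u)
      = φ⁻¹ * ∫ s in (t - φ)..(t + φ), G ((s - t) / φ) * h s := by
    calc ∫ u in (-1 : ℝ)..1, G u * h (t + φ * u)
        = ∫ u in (-1 : ℝ)..1, (fun s => G ((s - t) / φ) * h s) (φ * u + t) :=
          intervalIntegral.integral_congr fun u _ => by
            dsimp only
            rw [add_sub_cancel_right, mul_div_cancel_left₀ _ hφ.ne', add_comm (φ * u)]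
      _ = φ⁻¹ • ∫ s in (φ * -1 + t)..(φ * 1 + t), G ((s - t) / φ) * h s :=
          intervalIntegral.integral_comp_mul_add (fun s => G ((s - t) / φ) * h s) hφ.ne' t
      _ = φ⁻¹ * ∫ s in (t - φ)..(t + φ), G ((s - t) / φ) * h s := by
          rw [smul_eq_mul, mul_neg_one, mul_one, neg_add_eq_sub, add_comm φ]
  rw [hwindow, hsubst, one_div]

theorem abs_integral_mul_le_of_abs_le {F : ℝ → ℝ} {c : ℝ} (hab : a ≤ b)
    (hG : IntervalIntegrable G volume a b) (hF : ∀ u ∈ Icc a b, |F u| ≤ c) :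
    |∫ u in a..b, G u * F u| ≤ (∫ u in a..b, |G u|) * c := by
  rw [← intervalIntegral.integral_mul_const c fun u => |G u|]
  refine intervalIntegral.norm_integral_le_of_norm_le hab (f := fun u => G u * F u)
    (ae_of_all _ fun u hu => ?_) (hG.abs.mul_const c)
  rw [Real.norm_eq_abs, abs_mul]
  exact mul_le_mul_of_nonneg_left (hF u (Ioc_subset_Icc_self hu)) (abs_nonneg _)

theorem abs_kernel_average_sub_le {y d c : ℝ} (hGi : IntervalIntegrable G volume (-1) 1)
    (hGsupp : ∀ u, 1 ≤ |u| → G u = 0) (hG1 : ∫ u in (-1 : ℝ)..1, G u = 1)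
    (hG2 : ∫ u in (-1 : ℝ)..1, u * G u = 0) (hφ : 0 < φ) (ha : a ≤ t - φ) (hb : t + φ ≤ b)
    (hh : Continuous h) (hbound : ∀ s ∈ Icc (t - φ) (t + φ), |h s - y - (s - t) * d| ≤ c) :
    |(1 / φ) * (∫ s in a..b, G ((s - t) / φ) * h s) - y| ≤ (∫ u in (-1 : ℝ)..1, |G u|) * c := by
  have hhφ : Continuous fun u => h (t + φ * u) := hh.comp (by fun_prop)
  have hcenter : ∫ u in (-1 : ℝ)..1, G u * (h (t + φ * u) - y - φ * u * d)
      = (∫ u in (-1 : ℝ)..1, G u * h (t + φ * u)) - y := by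
    have hexpand : ∀ u, G u * (h (t + φ * u) - y - φ * u * d)
        = G u * h (t + φ * u) - y * G u - φ * d * (u * G u) := fun u => by ring
    simp only [hexpand]
    rw [intervalIntegral.integral_sub ((hGi.mul_continuousOn hhφ.continuousOn).sub
        (hGi.const_mul y)) ((hGi.continuousOn_mul (g := fun u => u) continuousOn_id).const_mul _),
      intervalIntegral.integral_sub (hGi.mul_continuousOn hhφ.continuousOn) (hGi.const_mul y),
      intervalIntegral.integral_const_mul, intervalIntegral.integral_const_mul, hG1, hG2]
    ring
  rw [kernel_average_eq hGsupp hφ ha hb, ← hcenter]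
  refine abs_integral_mul_le_of_abs_le (by norm_num) hGi fun u hu => ?_
  have hs : t + φ * u ∈ Icc (t - φ) (t + φ) := ⟨by nlinarith [hu.1], by nlinarith [hu.2]⟩
  simpa [show t + φ * u - t = φ * u by ring] using hbound _ hs

end Kernel

section DriftAlongSolution

variable {f : ℝ × ℝ → ℝ} {x : ℝ → ℝ} {τ T B M L : ℝ}

theorem abs_drift_sub_le
    (hf : ∀ t y t' y', |f (t, y) - f (t', y')| ≤ M * |t - t'| + L * |y - y'|) (hL : 0 ≤ L)
    (hx : ∀ c ∈ Icc 0 T, ∀ d ∈ Icc 0 T, |x d - x c| ≤ B * |d - c|) {r r' : ℝ}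
    (hr : r - τ ∈ Icc 0 T) (hr' : r' - τ ∈ Icc 0 T) :
    |f (r, x (r - τ)) - f (r', x (r' - τ))| ≤ (M + L * B) * |r - r'| := by
  have hxr := hx _ hr' _ hr
  rw [sub_sub_sub_cancel_right] at hxr
  calc _ ≤ M * |r - r'| + L * |x (r - τ) - x (r' - τ)| := hf _ _ _ _
    _ ≤ M * |r - r'| + L * (B * |r - r'|) := by gcongr
    _ = (M + L * B) * |r - r'| := by ring

theorem hasDerivAt_drift (hf : Differentiable ℝ f) {r v : ℝ} (hx : HasDerivAt x v (r - τ)) :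
    HasDerivAt (fun r => f (r, x (r - τ))) (fderiv ℝ f (r, x (r - τ)) (1, v)) r :=
  (hf _).hasFDerivAt.comp_hasDerivAt r ((hasDerivAt_id r).prodMk (hx.comp_sub_const r τ))

theorem abs_deriv_drift_sub_le {H D : ℝ}
    (hf : ∀ t y t' y', |f (t, y) - f (t', y')| ≤ M * |t - t'| + L * |y - y'|)
    (hfB : ∀ p, |f p| ≤ B) (hA : ∀ p, ‖fderiv ℝ f p‖ ≤ D)
    (hA' : ∀ p q, ‖fderiv ℝ f p - fderiv ℝ f q‖ ≤ H * ‖p - q‖) (hH : 0 ≤ H) (hL : 0 ≤ L)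
    (hx : ∀ c ∈ Icc 0 T, ∀ d ∈ Icc 0 T, |x d - x c| ≤ B * |d - c|) (hτ : 0 ≤ τ) {r r' : ℝ}
    (hr : r ∈ Icc (2 * τ) T) (hr' : r' ∈ Icc (2 * τ) T) :
    |fderiv ℝ f (r, x (r - τ)) (1, f (r - τ, x (r - τ - τ)))
        - fderiv ℝ f (r', x (r' - τ)) (1, f (r' - τ, x (r' - τ - τ)))|
      ≤ (H * (1 + B) ^ 2 + D * (M + L * B)) * |r - r'| := by
  have hB : 0 ≤ B := (abs_nonneg _).trans (hfB 0)
  have hD : 0 ≤ D := (norm_nonneg _).trans (hA 0)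
  have hmem : ∀ q ∈ Icc (2 * τ) T, q - τ ∈ Icc 0 T ∧ q - τ - τ ∈ Icc 0 T := fun q hq =>
    ⟨⟨by linarith [hq.1], by linarith [hq.2]⟩, ⟨by linarith [hq.1], by linarith [hq.2]⟩⟩
  have hpos : ‖((r, x (r - τ)) : ℝ × ℝ) - (r', x (r' - τ))‖ ≤ (1 + B) * |r - r'| := by
    refine norm_prod_le_iff.2 ⟨?_, ?_⟩
    · simpa using le_mul_of_one_le_left (abs_nonneg (r - r')) (by linarith)
    · have hxr := hx _ (hmem r' hr').1 _ (hmem r hr).1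
      rw [sub_sub_sub_cancel_right] at hxr
      simpa using hxr.trans (by nlinarith [abs_nonneg (r - r')])
  have hvel : ‖((1 : ℝ), f (r - τ, x (r - τ - τ)))‖ ≤ 1 + B :=
    norm_prod_le_iff.2 ⟨by simpa using hB, by simpa using (hfB _).trans (by linarith)⟩
  have hvel' : ‖((1 : ℝ), f (r - τ, x (r - τ - τ))) - (1, f (r' - τ, x (r' - τ - τ)))‖
      ≤ (M + L * B) * |r - r'| := by
    have hdrift := abs_drift_sub_le hf hL hx (hmem r hr).2 (hmem r' hr').2
    rw [sub_sub_sub_cancel_right] at hdrift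
    exact norm_prod_le_iff.2 ⟨by simpa using (abs_nonneg _).trans hdrift, by simpa using hdrift⟩
  calc _ ≤ ‖fderiv ℝ f (r, x (r - τ)) - fderiv ℝ f (r', x (r' - τ))‖
          * ‖((1 : ℝ), f (r - τ, x (r - τ - τ)))‖
        + ‖fderiv ℝ f (r', x (r' - τ))‖
          * ‖((1 : ℝ), f (r - τ, x (r - τ - τ))) - (1, f (r' - τ, x (r' - τ - τ)))‖ :=
        ContinuousLinearMap.norm_apply_sub_apply_le _ _ _ _
    _ ≤ H * ((1 + B) * |r - r'|) * (1 + B) + D * ((M + L * B) * |r - r'|) := by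
        gcongr
        · exact (hA' _ _).trans (by gcongr)
        · exact hA _
    _ = (H * (1 + B) ^ 2 + D * (M + L * B)) * |r - r'| := by ring

theorem exists_abs_drift_sub_sub_mul_le {H D : ℝ}
    (hfd : Differentiable ℝ f)
    (hf : ∀ t y t' y', |f (t, y) - f (t', y')| ≤ M * |t - t'| + L * |y - y'|)
    (hfB : ∀ p, |f p| ≤ B) (hA : ∀ p, ‖fderiv ℝ f p‖ ≤ D)
    (hA' : ∀ p q, ‖fderiv ℝ f p - fderiv ℝ f q‖ ≤ H * ‖p - q‖) (hH : 0 ≤ H) (hM : 0 ≤ M)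
    (hL : 0 ≤ L) (hx : ∀ c ∈ Icc 0 T, ∀ d ∈ Icc 0 T, |x d - x c| ≤ B * |d - c|)
    (hxd : ∀ r ∈ Ioo 0 T, HasDerivAt x (f (r, x (r - τ))) r) (hτ : 0 < τ) {r₀ : ℝ}
    (hr₀ : r₀ ∈ Icc (2 * τ) T) :
    ∃ d, ∀ r ∈ Icc (2 * τ) T, |f (r, x (r - τ)) - f (r₀, x (r₀ - τ)) - (r - r₀) * d|
      ≤ (H * (1 + B) ^ 2 + D * (M + L * B)) * (r - r₀) ^ 2 := by
  have hB : 0 ≤ B := (abs_nonneg _).trans (hfB 0)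
  have hD : 0 ≤ D := (norm_nonneg _).trans (hA 0)
  refine ⟨_, fun r hr => abs_sub_sub_mul_le_of_abs_deriv_sub_le (convex_Icc _ _) (by positivity)
    (fun q hq => hasDerivAt_drift hfd (hxd _ ⟨by linarith [hq.1], by linarith [hq.2]⟩))
    (fun q hq => abs_deriv_drift_sub_le hf hfB hA hA' hH hL hx hτ.le hq hr₀) hr₀ hr⟩

end DriftAlongSolution

theorem abs_kernel_drift_sub_le {G : ℝ → ℝ} {f : ℝ × ℝ → ℝ} {x X : ℝ → ℝ}
    {x₀ τ T α B M L M₂ δ t₁ t₂ φ : ℝ} (hτ : 0 < τ) (hα : 0 < α)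
    (hGint : Integrable G) (hGsupp : ∀ u : ℝ, 1 ≤ |u| → G u = 0)
    (hG1 : ∫ u in (-1 : ℝ)..1, G u = 1) (hG2 : ∫ u in (-1 : ℝ)..1, u * G u = 0)
    (hf : ContDiff ℝ 2 f) (hfα : ∀ p, α ≤ f p) (hfB : ∀ p, f p ≤ B)
    (hM : ∀ t y, |deriv (fun a => f (a, y)) t| ≤ M)
    (hL : ∀ t y, |deriv (fun b => f (t, b)) y| ≤ L)
    (h₁₁ : ∀ t y, |deriv (deriv (fun a => f (a, y))) t| ≤ M₂)
    (h₁₂ : ∀ t y, |deriv (fun a => deriv (fun b => f (a, b)) y) t| ≤ M₂)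
    (h₂₂ : ∀ t y, |deriv (deriv (fun b => f (t, b))) y| ≤ M₂)
    (hx : Continuous x) (hX : Continuous X)
    (hxeq : ∀ t ∈ Icc 0 T, x t = x₀ + ∫ s in (0 : ℝ)..t, f (s, x (s - τ)))
    (hclose : ∀ t ∈ Icc 0 T, |X t - x t| ≤ δ)
    (ht₁ : t₁ ∈ Ioo τ T) (ht₂ : t₂ ∈ Ioo τ T) (hlevel : x (t₁ - τ) = X (t₂ - τ))
    (hφ : 0 < φ) (hφl : 2 * τ ≤ t₂ - φ) (hφr : t₂ + φ ≤ T) :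
    |(1 / φ) * (∫ s in (0 : ℝ)..T, G ((s - t₂) / φ) * f (s, X (s - τ))) - f (t₁, x (t₁ - τ))|
      ≤ (∫ u in (-1 : ℝ)..1, |G u|) * (L * δ
        + (4 * M₂ * (1 + B) ^ 2 + (M + L) * (M + L * B)) * φ ^ 2 + (M + L * B) * (δ / α)) := by
  have hfd : Differentiable ℝ f := hf.differentiable two_ne_zero
  have hM₀ : 0 ≤ M := (abs_nonneg _).trans (hM 0 0)
  have hL₀ : 0 ≤ L := (abs_nonneg _).trans (hL 0 0)
  have hM₂₀ : 0 ≤ M₂ := (abs_nonneg _).trans (h₁₁ 0 0)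
  have hfB' : ∀ p, |f p| ≤ B := fun p => abs_le.2 ⟨by linarith [hfα p, hfB p], hfB p⟩
  have hB₀ : 0 ≤ B := (abs_nonneg _).trans (hfB' 0)
  have hflip := abs_sub_le_of_abs_deriv_slice_le hfd hM hL
  have hv : Continuous fun s => f (s, x (s - τ)) := hf.continuous.comp (by fun_prop)
  have hxlip : ∀ c ∈ Icc 0 T, ∀ d ∈ Icc 0 T, |x d - x c| ≤ B * |d - c| :=
    fun c hc d hd => abs_sub_le_of_eq_integral hv (fun s => hfB' _) hxeq hc hd
  have ht₁τ : t₁ - τ ∈ Icc 0 T := ⟨by linarith [ht₁.1], by linarith [ht₁.2]⟩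
  have ht₂τ : t₂ - τ ∈ Icc 0 T := ⟨by linarith [ht₂.1], by linarith [ht₂.2]⟩
  have ht₁₂ : |t₂ - t₁| ≤ δ / α := by
    have hhit := abs_sub_le_abs_sub_div_of_eq_integral hα hv (fun s => hfα _) hxeq ht₁τ ht₂τ
    rw [sub_sub_sub_cancel_right, hlevel, abs_sub_comm (x _)] at hhit
    exact hhit.trans (div_le_div_of_nonneg_right (hclose _ ht₂τ) hα.le)
  obtain ⟨d, hd⟩ := exists_abs_drift_sub_sub_mul_le hfd hflip hfB'
    (norm_fderiv_le_of_abs_deriv_slice_le hfd hM hL) (norm_fderiv_sub_fderiv_le hf h₁₁ h₁₂ h₂₂)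
    (by linarith) hM₀ hL₀ hxlip (fun r hr => hasDerivAt_of_eq_integral hv hxeq hr) hτ
    (r₀ := t₂) ⟨by linarith, ht₂.2.le⟩
  refine abs_kernel_average_sub_le hGint.intervalIntegrable hGsupp hG1 hG2 hφ (by linarith) hφr
    (hf.continuous.comp (by fun_prop)) (d := d) fun s hs => ?_
  have hsτ : s - τ ∈ Icc 0 T := ⟨by linarith [hs.1], by linarith [hs.2]⟩
  have hperturb : |f (s, X (s - τ)) - f (s, x (s - τ))| ≤ L * δ := by
    have hslice := hflip s (X (s - τ)) s (x (s - τ))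
    rw [sub_self, abs_zero, mul_zero, zero_add] at hslice
    exact hslice.trans (mul_le_mul_of_nonneg_left (hclose _ hsτ) hL₀)
  have hbias : |f (s, x (s - τ)) - f (t₂, x (t₂ - τ)) - (s - t₂) * d|
      ≤ (4 * M₂ * (1 + B) ^ 2 + (M + L) * (M + L * B)) * φ ^ 2 :=
    (hd s ⟨by linarith [hs.1], hs.2.trans hφr⟩).trans (mul_le_mul_of_nonneg_left
      (sq_le_sq' (by linarith [hs.1]) (by linarith [hs.2])) (by positivity))
  have hshift : |f (t₂, x (t₂ - τ)) - f (t₁, x (t₁ - τ))| ≤ (M + L * B) * (δ / α) :=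
    (abs_drift_sub_le hflip hL₀ hxlip ht₂τ ht₁τ).trans (by gcongr)
  calc _ = |(f (s, X (s - τ)) - f (s, x (s - τ)))
          + (f (s, x (s - τ)) - f (t₂, x (t₂ - τ)) - (s - t₂) * d)
          + (f (t₂, x (t₂ - τ)) - f (t₁, x (t₁ - τ)))| := by ring_nf
    _ ≤ _ := (abs_add_three _ _ _).trans (add_le_add_three hperturb hbias hshift)

theorem abs_le_iSup_abs_of_continuousOn {w : ℝ → ℝ} {a b s : ℝ}
    (hw : ContinuousOn w (Icc a b)) (hs : s ∈ Icc a b) : |w s| ≤ ⨆ r : Icc a b, |w r| :=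
  le_ciSup (isCompact_range (continuousOn_iff_continuous_domRestrict.1 hw).abs).bddAbove
    (⟨s, hs⟩ : Icc a b)

theorem kernel_estimator_drift_part_bound_general
    (T τ α L M B M₂ : ℝ) (hτ : 0 < τ)
    (hα : 0 < α)
    (G : ℝ → ℝ)
    (hGint : MeasureTheory.Integrable G)
    (hGsupp : ∀ u : ℝ, 1 ≤ |u| → G u = 0)
    (hG1 : (∫ u in (-1:ℝ)..1, G u) = 1)
    (hG2 : (∫ u in (-1:ℝ)..1, u * G u) = 0) :
    ∃ C : ℝ, 0 < C ∧
      ∀ (x₀ ε : ℝ) (w : ℝ → ℝ) (S : ℝ → ℝ → ℝ) (x X : ℝ → ℝ) (t₁ t₂ φ : ℝ),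
        0 < ε →
        ContinuousOn w (Set.Icc 0 T) → w 0 = 0 →
        ContDiff ℝ 2 (fun p : ℝ × ℝ => S p.1 p.2) →
        (∀ t y : ℝ, α ≤ S t y) → (∀ t y : ℝ, S t y ≤ B) →
        (∀ t y : ℝ, |deriv (fun a => S a y) t| ≤ M) →
        (∀ t y : ℝ, |deriv (fun b => S t b) y| ≤ L) →
        (∀ t y : ℝ, |deriv (deriv (fun a => S a y)) t| ≤ M₂) →
        (∀ t y : ℝ, |deriv (fun a => deriv (fun b => S a b) y) t| ≤ M₂) →
        (∀ t y : ℝ, |deriv (deriv (fun b => S t b)) y| ≤ M₂) →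
        Continuous x → Continuous X →
        (∀ s ≤ (0:ℝ), x s = x₀) → (∀ s ≤ (0:ℝ), X s = x₀) →
        (∀ t ∈ Set.Icc (0:ℝ) T, x t = x₀ + ∫ s in (0:ℝ)..t, S s (x (s - τ))) →
        (∀ t ∈ Set.Icc (0:ℝ) T,
          X t = x₀ + (∫ s in (0:ℝ)..t, S s (X (s - τ))) + ε * w t) →
        t₁ ∈ Set.Ioo τ T → t₂ ∈ Set.Ioo τ T →
        x (t₁ - τ) = X (t₂ - τ) →
        t₁ - τ ≠ τ → t₂ - τ ≠ τ →
        0 < φ → 2 * τ ≤ t₂ - φ → t₂ + φ ≤ T →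
        |(1 / φ) * (∫ s in (0:ℝ)..T, G ((s - t₂) / φ) * S s (X (s - τ))) -
            S t₁ (x (t₁ - τ))| ≤
          C * (φ ^ 2 + ε * ⨆ s : Set.Icc (0:ℝ) T, |w s.1|) := by
  set Γ := ∫ u in (-1 : ℝ)..1, |G u|
  set a := Γ * (4 * M₂ * (1 + B) ^ 2 + (M + L) * (M + L * B))
  set b := Γ * (L + (M + L * B) / α) * exp (L * T)
  refine ⟨|a| + |b| + 1, by positivity, ?_⟩
  intro x₀ ε w S x X t₁ t₂ φ hε hw _ hS hSα hSB hM hL h₁₁ h₁₂ h₂₂ hx hX hx₀ hX₀ hxeq hXeq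
    ht₁ ht₂ hlevel _ _ hφ hφl hφr
  set W := ⨆ s : Icc (0 : ℝ) T, |w s.1|
  have hnoise : ∀ t ∈ Icc 0 T, |ε * w t| ≤ ε * W := fun t ht => by
    rw [abs_mul, abs_of_pos hε]
    exact mul_le_mul_of_nonneg_left (abs_le_iSup_abs_of_continuousOn hw ht) hε.le
  have hεW : 0 ≤ ε * W :=
    (abs_nonneg _).trans (hnoise 0 ⟨le_rfl, by linarith [ht₁.1, ht₁.2]⟩)
  have hL₀ : 0 ≤ L := (abs_nonneg _).trans (hL 0 0)
  have hSlip := abs_sub_le_of_abs_deriv_slice_le (hS.differentiable two_ne_zero) hM hL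
  have hclose : ∀ t ∈ Icc 0 T, |X t - x t| ≤ ε * W * exp (L * T) := fun t ht =>
    (abs_sub_le_of_delay_integral_eq (e := fun t => ε * w t) hτ.le hL₀ hS.continuous
      (fun t y y' => by simpa using hSlip t y t y') hx hX hx₀ hX₀ hxeq hXeq hnoise t ht).trans
      (by gcongr; exact ht.2)
  calc _ ≤ Γ * (L * (ε * W * exp (L * T)) + (4 * M₂ * (1 + B) ^ 2 + (M + L) * (M + L * B))
          * φ ^ 2 + (M + L * B) * (ε * W * exp (L * T) / α)) :=
        abs_kernel_drift_sub_le hτ hα hGint hGsupp hG1 hG2 hS (fun p => hSα p.1 p.2)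
          (fun p => hSB p.1 p.2) hM hL h₁₁ h₁₂ h₂₂ hx hX hxeq hclose ht₁ ht₂ hlevel hφ hφl hφr
    _ = a * φ ^ 2 + b * (ε * W) := by ring
    _ ≤ (|a| + |b| + 1) * (φ ^ 2 + ε * W) := by
        nlinarith [le_abs_self a, le_abs_self b, abs_nonneg a, abs_nonneg b, sq_nonneg φ]

/-- Deterministic (drift) part of the error decomposition (3.15) in the proof of
Theorem 3.1: there is a constant `C > 0` depending only on `T, τ, α, L, M, B, M₂` and the
kernel `G` such that, whenever the hitting times `t₁` (for the deterministic solution `x`)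
and `t₂` (for the perturbed solution `X`) correspond to the same level, the kernel average
at `t₂` of the drift `s ↦ S(s, X(s-τ))` differs from `S(t₁, x(t₁-τ))` by at most
`C (φ² + ε sup_{0≤s≤T} |w(s)|)`. -/
theorem kernel_estimator_drift_part_bound
    (T τ α L M B M₂ : ℝ) (hτ : 0 < τ) (hT : τ < T)
    (hα : 0 < α) (hL : 0 < L) (hM : 0 < M) (hB : 0 < B)
    (G : ℝ → ℝ) (hGbdd : ∃ K : ℝ, ∀ u, |G u| ≤ K)
    (hGint : MeasureTheory.Integrable G)
    (hGsupp : ∀ u : ℝ, 1 ≤ |u| → G u = 0)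
    (hG1 : (∫ u in (-1:ℝ)..1, G u) = 1)
    (hG2 : (∫ u in (-1:ℝ)..1, u * G u) = 0) :
    ∃ C : ℝ, 0 < C ∧
      ∀ (x₀ ε : ℝ) (w : ℝ → ℝ) (S : ℝ → ℝ → ℝ) (x X : ℝ → ℝ) (t₁ t₂ φ : ℝ),
        0 < ε →
        ContinuousOn w (Set.Icc 0 T) → w 0 = 0 →
        ContDiff ℝ 2 (fun p : ℝ × ℝ => S p.1 p.2) →
        (∀ t y : ℝ, α ≤ S t y) → (∀ t y : ℝ, S t y ≤ B) →
        (∀ t y : ℝ, |deriv (fun a => S a y) t| ≤ M) →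
        (∀ t y : ℝ, |deriv (fun b => S t b) y| ≤ L) →
        (∀ t y : ℝ, |deriv (deriv (fun a => S a y)) t| ≤ M₂) →
        (∀ t y : ℝ, |deriv (fun a => deriv (fun b => S a b) y) t| ≤ M₂) →
        (∀ t y : ℝ, |deriv (deriv (fun b => S t b)) y| ≤ M₂) →
        Continuous x → Continuous X →
        (∀ s ≤ (0:ℝ), x s = x₀) → (∀ s ≤ (0:ℝ), X s = x₀) →
        (∀ t ∈ Set.Icc (0:ℝ) T, x t = x₀ + ∫ s in (0:ℝ)..t, S s (x (s - τ))) →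
        (∀ t ∈ Set.Icc (0:ℝ) T,
          X t = x₀ + (∫ s in (0:ℝ)..t, S s (X (s - τ))) + ε * w t) →
        t₁ ∈ Set.Ioo τ T → t₂ ∈ Set.Ioo τ T →
        x (t₁ - τ) = X (t₂ - τ) →
        t₁ - τ ≠ τ → t₂ - τ ≠ τ →
        0 < φ → 2 * τ ≤ t₂ - φ → t₂ + φ ≤ T →
        |(1 / φ) * (∫ s in (0:ℝ)..T, G ((s - t₂) / φ) * S s (X (s - τ))) -
            S t₁ (x (t₁ - τ))| ≤
          C * (φ ^ 2 + ε * ⨆ s : Set.Icc (0:ℝ) T, |w s.1|) :=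
  kernel_estimator_drift_part_bound_general T τ α L M B M₂ hτ hα G hGint hGsupp hG1 hG2
end
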